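/- With the same definitions and hypotheses, for p = k the closed-form x^{(k)}_{1,k}(t) = N μ_D μ_P^k ς_P^{k(k+1)/2}/∏_{n=0}^{k-1}(1-ς_P^{n+1}) · [ν_P^{t-k} Ψ_{k,k}(t) − (ν_D ς_D ς_DP^k)^{t-k} Ψ_{k,k}(k)] satisfies the recursion x^{(k)}_{1,k}(t) = ν_D ς_D ς_DP^k x^{(k)}_{1,k}(t-1) + μ_D ς_P^k x_{0,k}(t-1), where x_{0,k}(t) = N μ_P^k ν_P^{t-k} ς_P^{k(k-1)/2} ∏_{n=0}^{k-1}(1-ς_P^{t-n})/(1-ς_P^{n+1}). -/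

import Mathlib

/-- The Gaussian (q-)binomial coefficient. -/
noncomputable def qbinom (t k : ℕ) (q : ℝ) : ℝ :=
  ∏ n ∈ Finset.range k, (1 - q ^ (t - n)) / (1 - q ^ (n + 1))

/-- `Ψ_{p,k}(t)` from the closed-form solution for driver-carrying cells. -/
noncomputable def Psi (νP νD ςP ςD ςDP : ℝ) (p k : ℕ) (t : ℤ) : ℝ :=
  ∑ r ∈ Finset.range (p + 1),
    ((-(ςP ^ (t - p + 1))) ^ r * ςP ^ (r * (r - 1) / 2) * qbinom p r ςP) /
      ∏ j ∈ Finset.Icc p k, (νP * ςP ^ r - νD * ςD * ςDP ^ j)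

/-- Closed form for `x^{(k)}_{1,k}(t)` (primary driver acquired last). -/
noncomputable def x1kk (N μD μP νP νD ςP ςD ςDP : ℝ) (k : ℕ) (t : ℤ) : ℝ :=
  N * μD * μP ^ k * (ςP ^ (k * (k + 1) / 2) / ∏ n ∈ Finset.range k, (1 - ςP ^ (n + 1))) *
    (νP ^ (t - k) * Psi νP νD ςP ςD ςDP k k t -
      (νD * ςD * ςDP ^ k) ^ (t - k) * Psi νP νD ςP ςD ςDP k k k)

/-- Closed form for `x_{0,k}(t)`, the expected number of cells with `k` secondary
drivers and no primary driver. -/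
noncomputable def x0 (N μP νP ςP : ℝ) (k : ℕ) (t : ℤ) : ℝ :=
  N * μP ^ k * νP ^ (t - k) * ςP ^ (k * (k - 1) / 2) *
    ∏ n ∈ Finset.range k, (1 - ςP ^ (t - n)) / (1 - ςP ^ (n + 1))

/-!
Only the `r`-th summand of `Ψ_{k,k}(t)` depends on `t`, through `(-ς_P^{t-k+1})^r`, and replacing `t`
by `t - 1` divides it by `ς_P^r`. Hence in `ν_P Ψ_{k,k}(t) - ν_D ς_D ς_DP^k Ψ_{k,k}(t-1)` every
denominator `ν_P ς_P^r - ν_D ς_D ς_DP^k` cancels, and what is left is the sum in the q-binomial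
theorem for `∏_{n<k} (1 - ς_P^{t-k+n})`, the product in `x_{0,k}(t-1)`. The other term
`(ν_D ς_D ς_DP^k)^{t-k} Ψ_{k,k}(k)` of the closed form solves the homogeneous recursion.
-/

open Finset

section QBinomial

variable {q : ℝ}

lemma qbinom_zero_right (k : ℕ) : qbinom k 0 q = 1 := by
  simp [qbinom]

lemma qbinom_succ_self (k : ℕ) : qbinom k (k + 1) q = 0 :=
  prod_eq_zero (self_mem_range_succ k) (by simp)

lemma qbinom_eq_div (k r : ℕ) :
    qbinom k r q = (∏ n ∈ range r, (1 - q ^ (k - n))) / ∏ n ∈ range r, (1 - q ^ (n + 1)) :=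
  prod_div_distrib ..

lemma qbinom_succ_succ (hq : ∀ n : ℕ, q ^ (n + 1) ≠ 1) (k r : ℕ) :
    qbinom (k + 1) (r + 1) q = q ^ (r + 1) * qbinom k (r + 1) q + qbinom k r q := by
  have hden : ∏ n ∈ range r, (1 - q ^ (n + 1)) ≠ 0 :=
    prod_ne_zero_iff.2 fun n _ => sub_ne_zero.2 (hq n).symm
  have hlast : 1 - q ^ (r + 1) ≠ 0 := sub_ne_zero.2 (hq r).symm
  set Nk := ∏ n ∈ range r, (1 - q ^ (k - n))
  have hnum : ∏ n ∈ range (r + 1), (1 - q ^ (k + 1 - n)) = Nk * (1 - q ^ (k + 1)) := by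
    rw [prod_range_succ']
    simp [Nk]
  -- for `r > k` the factor `n = k` of `Nk` vanishes
  have hexp : Nk * (q ^ (r + 1) * q ^ (k - r)) = Nk * q ^ (k + 1) := by
    rcases le_or_gt r k with h | h
    · rw [← pow_add, show r + 1 + (k - r) = k + 1 by omega]
    · have hNk : Nk = 0 := prod_eq_zero (mem_range.2 h) (by simp)
      rw [hNk, zero_mul, zero_mul]
  rw [qbinom_eq_div, qbinom_eq_div, qbinom_eq_div, hnum, prod_range_succ _ r,
    prod_range_succ _ r]
  field_simp
  linear_combination hexp

theorem prod_one_sub_mul_pow_eq_sum_qbinom (hq : ∀ n : ℕ, q ^ (n + 1) ≠ 1) (k : ℕ) (z : ℝ) :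
    ∏ n ∈ range k, (1 - z * q ^ n) =
      ∑ r ∈ range (k + 1), (-z) ^ r * q ^ (r * (r - 1) / 2) * qbinom k r q := by
  induction k generalizing z with
  | zero => simp [qbinom]
  | succ k ih =>
    set T : ℕ → ℝ := fun r => (-(z * q)) ^ r * q ^ (r * (r - 1) / 2) * qbinom k r q with hT
    have hS : ∑ r ∈ range (k + 1), T r = ∏ n ∈ range k, (1 - z * q ^ (n + 1)) :=
      calc ∑ r ∈ range (k + 1), T r = ∏ n ∈ range k, (1 - z * q * q ^ n) := (ih (z * q)).symm
        _ = ∏ n ∈ range k, (1 - z * q ^ (n + 1)) := by simp only [pow_succ', mul_assoc]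
    have hpascal : ∀ r, (-z) ^ (r + 1) * q ^ ((r + 1) * (r + 1 - 1) / 2) * qbinom (k + 1) (r + 1) q
        = T (r + 1) + (-z) * T r := by
      intro r
      simp only [hT, qbinom_succ_succ hq, Nat.triangle_succ]
      ring
    have hshift : ∑ r ∈ range (k + 1), T (r + 1) = ∑ r ∈ range (k + 1), T r - 1 := by
      have h := sum_range_succ' T (k + 1)
      rw [sum_range_succ, hT] at h
      simp only [qbinom_succ_self, qbinom_zero_right, mul_zero, add_zero] at h
      linarith
    rw [prod_range_succ', ← hS, sum_range_succ' _ (k + 1), sum_congr rfl fun r _ => hpascal r,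
      sum_add_distrib, ← mul_sum, hshift]
    simp only [pow_zero, mul_one, qbinom_zero_right]
    ring

end QBinomial

lemma pow_succ_ne_one_of_pos {q : ℝ} (hq0 : 0 < q) (hq1 : q ≠ 1) (n : ℕ) : q ^ (n + 1) ≠ 1 :=
  fun h => hq1 ((pow_eq_one_iff_of_nonneg hq0.le n.succ_ne_zero).1 h)

lemma prod_one_sub_zpow_mul_pow_range {q : ℝ} (hq : q ≠ 0) (k : ℕ) (t : ℤ) :
    ∏ n ∈ range k, (1 - q ^ (t - k) * q ^ n) = ∏ n ∈ range k, (1 - q ^ (t - 1 - n)) := by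
  rw [← prod_range_reflect (fun n : ℕ => 1 - q ^ (t - 1 - n)) k]
  refine prod_congr rfl fun n hn => ?_
  have hnk : 1 + n ≤ k := by have := mem_range.1 hn; omega
  rw [← zpow_natCast, ← zpow_add₀ hq, Nat.sub_sub, Nat.cast_sub hnk]
  congr 2
  push_cast
  ring

section Psi

variable {νP νD ςP ςD ςDP : ℝ} {k : ℕ}

lemma Psi_self (t : ℤ) :
    Psi νP νD ςP ςD ςDP k k t = ∑ r ∈ range (k + 1),
      (-(ςP ^ (t - k + 1))) ^ r * ςP ^ (r * (r - 1) / 2) * qbinom k r ςP /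
        (νP * ςP ^ r - νD * ςD * ςDP ^ k) := by
  simp [Psi]

lemma Psi_self_recurrence (hq : ∀ n : ℕ, ςP ^ (n + 1) ≠ 1) (hςP : ςP ≠ 0)
    (hden : ∀ r ≤ k, νP * ςP ^ r ≠ νD * ςD * ςDP ^ k) (t : ℤ) :
    νP * Psi νP νD ςP ςD ςDP k k t - νD * ςD * ςDP ^ k * Psi νP νD ςP ςD ςDP k k (t - 1) =
      ∏ n ∈ range k, (1 - ςP ^ (t - k) * ςP ^ n) := by
  rw [prod_one_sub_mul_pow_eq_sum_qbinom hq, Psi_self, Psi_self, mul_sum, mul_sum,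
    ← sum_sub_distrib]
  refine sum_congr rfl fun r hr => ?_
  have hd : νP * ςP ^ r - νD * ςD * ςDP ^ k ≠ 0 :=
    sub_ne_zero.2 (hden r (Nat.lt_succ_iff.1 (mem_range.1 hr)))
  rw [show t - 1 - k + 1 = t - k by ring, zpow_add_one₀ hςP, neg_mul_eq_neg_mul, mul_pow]
  field_simp

end Psi

theorem x1kk_recursion_general (N μD μP νP νD ςP ςD ςDP : ℝ)
    (hνP : 0 < νP) (hνD : 0 < νD)
    (hςP : 0 < ςP) (hςD : 0 < ςD) (hςDP : 0 < ςDP)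
    (hςP1 : ςP ≠ 1)
    (k : ℕ)
    (hden : ∀ r ≤ k, νP * ςP ^ r ≠ νD * ςD * ςDP ^ k)
    (t : ℤ) :
    x1kk N μD μP νP νD ςP ςD ςDP k t
      = νD * ςD * ςDP ^ k * x1kk N μD μP νP νD ςP ςD ςDP k (t - 1)
        + μD * ςP ^ k * x0 N μP νP ςP k (t - 1) := by
  have hrec := Psi_self_recurrence (pow_succ_ne_one_of_pos hςP hςP1) hςP.ne' hden t
  rw [prod_one_sub_zpow_mul_pow_range hςP.ne'] at hrec
  have hA : νD * ςD * ςDP ^ k ≠ 0 := by positivity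
  have hpow : ∀ {a : ℝ}, a ≠ 0 → a ^ (t - k) = a * a ^ (t - 1 - k) := fun ha => by
    rw [← zpow_one_add₀ ha]
    congr 1
    ring
  have htri : ςP ^ (k * (k + 1) / 2) = ςP ^ (k * (k - 1) / 2) * ςP ^ k := by
    rw [← pow_add, ← Nat.triangle_succ, Nat.add_sub_cancel, mul_comm]
  rw [x1kk, x1kk, x0, prod_div_distrib, hpow hνP.ne', hpow hA, htri]
  linear_combination (N * μD * μP ^ k * (ςP ^ (k * (k - 1) / 2) * ςP ^ k /
    ∏ n ∈ range k, (1 - ςP ^ (n + 1))) * νP ^ (t - 1 - k)) * hrec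

/-- for `p = k`, the closed form satisfies the recursion
`x^{(k)}_{1,k}(t) = ν_D ς_D ς_DP^k x^{(k)}_{1,k}(t-1) + μ_D ς_P^k x_{0,k}(t-1)`. -/
theorem x1kk_recursion (N μD μP νP νD ςP ςD ςDP : ℝ)
    (hN : 0 < N) (hμD : 0 < μD) (hμP : 0 < μP) (hνP : 0 < νP) (hνD : 0 < νD)
    (hςP : 0 < ςP) (hςD : 0 < ςD) (hςDP : 0 < ςDP)
    (hςP1 : ςP ≠ 1) (hςDP1 : ςDP ≠ 1)
    (k : ℕ)
    (hden : ∀ r ≤ k, νP * ςP ^ r ≠ νD * ςD * ςDP ^ k)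
    (t : ℤ) :
    x1kk N μD μP νP νD ςP ςD ςDP k t
      = νD * ςD * ςDP ^ k * x1kk N μD μP νP νD ςP ςD ςDP k (t - 1)
        + μD * ςP ^ k * x0 N μP νP ςP k (t - 1) :=
  x1kk_recursion_general N μD μP νP νD ςP ςD ςDP hνP hνD hςP hςD hςDP hςP1 k hden t
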